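/- arXiv:0801.3797 — 2 statements merged into one kernel-verified Lean document; each statement's English description precedes it below -/
import Mathlib

section
/- Let n ≥ 1, let X_1, …, X_n be finite nonempty types, and let Ψ : Π_{a=1}^n X_a → ℝ be nonnegative. Suppose that for every k ∈ {1,…,n} and every y ∈ Π_{a≠k} X_a, ∑_{x_k ∈ X_k} Ψ(x_k, y) > 0 (where (x_k, y) denotes the tuple with k-th coordinate x_k and remaining coordinates y). For each k, define l_k, u_k : X_k → ℝ as the pointwise infimum and supremum, over all nonzero factorized measures g on Π_{a≠k} X_a, of the normalization of the function x_k ↦ ∑_{y ∈ Π_{a≠k} X_a} Ψ(x_k, y) g(y). Then for every k ∈ {1,…,n} and every x ∈ Π_{a=1}^n X_a, the partial sum ∑_{x'_1,…,x'_k} Ψ(x'_1,…,x'_k, x_{k+1},…,x_n) is strictly positive and l_k(x_k) ≤ (∑_{x'_1,…,x'_{k-1}} Ψ(x'_1,…,x'_{k-1}, x_k, x_{k+1},…,x_n)) / (∑_{x'_1,…,x'_k} Ψ(x'_1,…,x'_k, x_{k+1},…,x_n)) ≤ u_k(x_k). -/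
/-- Combine a value `xk : X k` with values `y` on the remaining coordinates
into an element of the full product `∀ a, X a`. -/
def splice {A : Type*} [DecidableEq A] {X : A → Type*} (k : A) (xk : X k)
    (y : ∀ a : {a : A // a ≠ k}, X a.1) : ∀ a, X a :=
  fun a => if h : a = k then cast (congrArg X h).symm xk else y ⟨a, h⟩

/-- The partial sum of `Ψ` over the first `j` coordinates (those `a : Fin n`
with `(a : ℕ) < j`), the remaining coordinates being fixed to those of `x`. -/
noncomputable def partialSum {n : ℕ} (X : Fin n → Type*) [∀ a, Fintype (X a)]
    (Ψ : (∀ a, X a) → ℝ) (j : ℕ) (x : ∀ a, X a) : ℝ :=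
  ∑ y : ∀ a : {a : Fin n // (a : ℕ) < j}, X a.1,
    Ψ (fun a => if h : (a : ℕ) < j then y ⟨a, h⟩ else x a)

section Aux

variable {n : ℕ} {X : Fin n → Type*}

/-- splice together low coordinates `z`, coordinate `xk` at `k`, high coordinates from `x`. -/
def bld (k : Fin n) (x : ∀ a, X a) (xk : X k)
    (z : ∀ a : {a : Fin n // (a : ℕ) < (k : ℕ)}, X a.1) : ∀ a, X a :=
  fun a => if h : (a : ℕ) < (k : ℕ) then z ⟨a, h⟩
    else if h' : a = k then cast (congrArg X h').symm xk else x a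

open Classical in
/-- the factorized indicator measure: free on low coordinates, point mass at `x` above `k`. -/
noncomputable def gsI (k : Fin n) (x : ∀ a, X a) (a : {a : Fin n // a ≠ k}) (za : X a.1) : ℝ :=
  if (a.1 : ℕ) < (k : ℕ) then 1 else if za = x a.1 then 1 else 0

noncomputable def gI (k : Fin n) (x : ∀ a, X a)
    (y : ∀ a : {a : Fin n // a ≠ k}, X a.1) : ℝ :=
  ∏ a, gsI k x a (y a)

variable [∀ a, Fintype (X a)] [∀ a, DecidableEq (X a)]

lemma gsI_nonneg (k : Fin n) (x : ∀ a, X a) (a : {a : Fin n // a ≠ k}) (za : X a.1) :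
    0 ≤ gsI k x a za := by
  unfold gsI; split_ifs <;> norm_num

lemma gI_restrict (k : Fin n) (x : ∀ a, X a) : gI k x (fun a => x a.1) = 1 := by
  unfold gI
  apply Finset.prod_eq_one
  intro a _
  unfold gsI
  split_ifs with h1 h2
  · rfl
  · rfl
  · exact absurd rfl h2

lemma gI_ind (k : Fin n) (x : ∀ a, X a) (y : ∀ a : {a : Fin n // a ≠ k}, X a.1) :
    gI k x y = if (∀ a : {a : Fin n // a ≠ k}, ¬((a.1 : ℕ) < (k : ℕ)) → y a = x a.1)
      then 1 else 0 := by
  unfold gI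
  split_ifs with hP
  · apply Finset.prod_eq_one
    intro a _
    unfold gsI
    split_ifs with h1 h2
    · rfl
    · rfl
    · exact absurd (hP a h1) h2
  · push_neg at hP
    obtain ⟨a, ha1, ha2⟩ := hP
    apply Finset.prod_eq_zero (Finset.mem_univ a)
    unfold gsI
    rw [if_neg (Nat.not_lt.2 ha1), if_neg ha2]

lemma lemA (Ψ : (∀ a, X a) → ℝ) (k : Fin n) (x : ∀ a, X a) (xk : X k) :
    (∑ y, Ψ (splice k xk y) * gI k x y) = ∑ z, Ψ (bld k x xk z) := by
  classical
  have h1 : (∑ y, Ψ (splice k xk y) * gI k x y)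
      = ∑ y ∈ Finset.univ.filter
          (fun y => ∀ a : {a : Fin n // a ≠ k}, ¬((a.1 : ℕ) < (k : ℕ)) → y a = x a.1),
          Ψ (splice k xk y) := by
    rw [Finset.sum_filter]
    refine Finset.sum_congr rfl fun y _ => ?_
    rw [gI_ind k x y, mul_ite, mul_one, mul_zero]
  rw [h1]
  refine Finset.sum_nbij'
    (fun y => fun a => y ⟨a.1, fun hc => by have := a.2; rw [hc] at this; omega⟩)
    (fun z => fun a => if h : (a.1 : ℕ) < (k : ℕ) then z ⟨a.1, h⟩ else x a.1)
    (fun y _ => Finset.mem_univ _)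
    (fun z _ => ?_) (fun y hy => ?_) (fun z _ => ?_) (fun y hy => ?_)
  · simp only [Finset.mem_filter, Finset.mem_univ, true_and]
    intro a ha
    rw [dif_neg ha]
  · funext a
    dsimp only
    by_cases h : (a.1 : ℕ) < (k : ℕ)
    · rw [dif_pos h]
    · rw [dif_neg h]
      exact ((Finset.mem_filter.1 hy).2 a h).symm
  · funext a
    dsimp only
    rw [dif_pos a.2]
  · congr 1
    funext a
    unfold splice bld
    dsimp only
    by_cases hak : a = k
    · subst hak
      rw [dif_pos rfl, dif_neg (by omega : ¬ ((a : ℕ) < (a : ℕ))), dif_pos rfl]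
    · rw [dif_neg hak]
      by_cases h2 : (a : ℕ) < (k : ℕ)
      · rw [dif_pos h2]
      · rw [dif_neg h2, dif_neg hak]
        exact (Finset.mem_filter.1 hy).2 ⟨a, hak⟩ h2

lemma lemA0 (Ψ : (∀ a, X a) → ℝ) (k : Fin n) (x : ∀ a, X a) :
    partialSum X Ψ (k : ℕ) x = ∑ z, Ψ (bld k x (x k) z) := by
  refine Finset.sum_congr rfl fun z _ => ?_
  congr 1
  funext a
  unfold bld
  by_cases h : (a : ℕ) < (k : ℕ)
  · rw [dif_pos h, dif_pos h]
  · rw [dif_neg h, dif_neg h]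
    by_cases hak : a = k
    · subst hak
      rw [dif_pos rfl]
      rfl
    · rw [dif_neg hak]

lemma lemB (Ψ : (∀ a, X a) → ℝ) (k : Fin n) (x : ∀ a, X a) :
    partialSum X Ψ ((k : ℕ) + 1) x = ∑ xk' : X k, ∑ z, Ψ (bld k x xk' z) := by
  have h2 : (∑ xk' : X k, ∑ z, Ψ (bld k x xk' z))
      = ∑ p : X k × (∀ a : {a : Fin n // (a : ℕ) < (k : ℕ)}, X a.1), Ψ (bld k x p.1 p.2) :=
    (Fintype.sum_prod_type' _).symm
  rw [h2]
  unfold partialSum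
  refine Finset.sum_nbij'
    (fun w => (w ⟨k, by omega⟩, fun a => w ⟨a.1, by have := a.2; omega⟩))
    (fun p => fun a => if h : (a.1 : ℕ) < (k : ℕ) then p.2 ⟨a.1, h⟩
      else cast (congrArg X (Fin.ext (by have := a.2; omega) : a.1 = k)).symm p.1)
    (fun w _ => Finset.mem_univ _) (fun p _ => Finset.mem_univ _)
    (fun w _ => ?_) (fun p _ => ?_) (fun w _ => ?_)
  · funext a
    dsimp only
    obtain ⟨a, ha⟩ := a
    by_cases h : (a : ℕ) < (k : ℕ)
    · rw [dif_pos h]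
    · rw [dif_neg h]
      have hak : a = k := Fin.ext (by omega)
      subst hak
      rfl
  · refine Prod.ext ?_ ?_
    · show (if h : ((k : Fin n) : ℕ) < (k : ℕ) then _ else _) = p.1
      rw [dif_neg (by omega : ¬ ((k : Fin n) : ℕ) < (k : ℕ))]
      rfl
    · funext a
      show (if h : (a.1 : ℕ) < (k : ℕ) then p.2 ⟨a.1, h⟩ else _) = p.2 a
      rw [dif_pos a.2]
  · congr 1
    funext a
    unfold bld
    dsimp only
    by_cases h1 : (a : ℕ) < (k : ℕ)
    · rw [dif_pos (by omega : (a : ℕ) < (k : ℕ) + 1), dif_pos h1]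
    · rw [dif_neg h1]
      by_cases hak : a = k
      · subst hak
        rw [dif_pos (by omega : (a : ℕ) < (a : ℕ) + 1), dif_pos rfl]
        rfl
      · have hne : (a : ℕ) ≠ (k : ℕ) := fun hc => hak (Fin.ext hc)
        rw [dif_neg (by omega : ¬ (a : ℕ) < (k : ℕ) + 1), dif_neg hak]

lemma splice_eq_bld (k : Fin n) (x : ∀ a, X a) (xk : X k) :
    splice k xk (fun a => x a.1) = bld k x xk (fun a => x a.1) := by
  funext a
  unfold splice bld
  by_cases hak : a = k
  · subst hak
    rw [dif_pos rfl, dif_neg (by omega : ¬ ((a : ℕ) < (a : ℕ)))]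
  · rw [dif_neg hak]
    by_cases h : (a : ℕ) < (k : ℕ)
    · rw [dif_pos h]
    · rw [dif_neg h]

set_option maxHeartbeats 1000000

end Aux

/-- Key step of the telegraph expansion: each successive ratio of partial sums of
`Ψ` is bounded between `l k (x k)` and `u k (x k)`, where `l k` and `u k` are the
pointwise infimum and supremum, over all nonzero factorized measures `g` on the
remaining coordinates, of the normalization of `xk ↦ ∑ y, Ψ (splice k xk y) * g y`. -/
theorem stmt_10 {n : ℕ} (hn : 1 ≤ n)
    (X : Fin n → Type*) [∀ a, Fintype (X a)] [∀ a, Nonempty (X a)]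
    (Ψ : (∀ a, X a) → ℝ) (hΨ : ∀ x, 0 ≤ Ψ x)
    (hpos : ∀ (k : Fin n) (y : ∀ a : {a : Fin n // a ≠ k}, X a.1),
      0 < ∑ xk : X k, Ψ (splice k xk y))
    (l u : ∀ k, X k → ℝ)
    (hl : ∀ (k : Fin n) (xk : X k),
      IsGLB {r : ℝ | ∃ g : (∀ a : {a : Fin n // a ≠ k}, X a.1) → ℝ,
          (∃ gs : ∀ a : {a : Fin n // a ≠ k}, X a.1 → ℝ,
            (∀ a z, 0 ≤ gs a z) ∧ g = fun y => ∏ a, gs a (y a)) ∧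
          (∃ y, 0 < g y) ∧
          r = (∑ y, Ψ (splice k xk y) * g y)
              / ∑ xk' : X k, ∑ y, Ψ (splice k xk' y) * g y}
        (l k xk))
    (hu : ∀ (k : Fin n) (xk : X k),
      IsLUB {r : ℝ | ∃ g : (∀ a : {a : Fin n // a ≠ k}, X a.1) → ℝ,
          (∃ gs : ∀ a : {a : Fin n // a ≠ k}, X a.1 → ℝ,
            (∀ a z, 0 ≤ gs a z) ∧ g = fun y => ∏ a, gs a (y a)) ∧
          (∃ y, 0 < g y) ∧
          r = (∑ y, Ψ (splice k xk y) * g y)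
              / ∑ xk' : X k, ∑ y, Ψ (splice k xk' y) * g y}
        (u k xk)) :
    ∀ (k : Fin n) (x : ∀ a, X a),
      0 < partialSum X Ψ ((k : ℕ) + 1) x ∧
      l k (x k) ≤ partialSum X Ψ (k : ℕ) x / partialSum X Ψ ((k : ℕ) + 1) x ∧
      partialSum X Ψ (k : ℕ) x / partialSum X Ψ ((k : ℕ) + 1) x ≤ u k (x k) := by
  classical
  intro k x
  have hD : 0 < ∑ xk' : X k, ∑ z, Ψ (bld k x xk' z) := by
    calc (0:ℝ) < ∑ xk' : X k, Ψ (splice k xk' (fun a => x a.1)) := hpos k _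
      _ = ∑ xk' : X k, Ψ (bld k x xk' (fun a => x a.1)) :=
          Finset.sum_congr rfl fun xk' _ => by rw [splice_eq_bld]
      _ ≤ ∑ xk' : X k, ∑ z, Ψ (bld k x xk' z) :=
          Finset.sum_le_sum fun xk' _ =>
            Finset.single_le_sum (fun z _ => hΨ _) (Finset.mem_univ _)
  have hBpos : 0 < partialSum X Ψ ((k : ℕ) + 1) x := by rw [lemB Ψ k x]; exact hD
  have hden : (∑ xk' : X k, ∑ y, Ψ (splice k xk' y) * gI k x y)
      = ∑ xk' : X k, ∑ z, Ψ (bld k x xk' z) :=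
    Finset.sum_congr rfl fun xk' _ => lemA Ψ k x xk'
  have hmem : partialSum X Ψ (k : ℕ) x / partialSum X Ψ ((k : ℕ) + 1) x ∈
      {r : ℝ | ∃ g : (∀ a : {a : Fin n // a ≠ k}, X a.1) → ℝ,
          (∃ gs : ∀ a : {a : Fin n // a ≠ k}, X a.1 → ℝ,
            (∀ a z, 0 ≤ gs a z) ∧ g = fun y => ∏ a, gs a (y a)) ∧
          (∃ y, 0 < g y) ∧
          r = (∑ y, Ψ (splice k (x k) y) * g y)
              / ∑ xk' : X k, ∑ y, Ψ (splice k xk' y) * g y} := by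
    refine ⟨gI k x, ⟨gsI k x, gsI_nonneg k x, rfl⟩,
      ⟨fun a => x a.1, by rw [gI_restrict]; norm_num⟩, ?_⟩
    rw [lemA Ψ k x (x k), hden, lemA0 Ψ k x, lemB Ψ k x]
  exact ⟨hBpos, (hl k (x k)).1 hmem, (hu k (x k)).1 hmem⟩
end

section
/- Let X_i be a finite nonempty type, let J be a finite nonempty index set with finite nonempty types (X_k)_{k∈J}, and let R be a finite nonempty type. Let ψ : X_i × Π_{k∈J} X_k → ℝ and Φ : (Π_{k∈J} X_k) × R → ℝ be nonnegative. Assume: (i) for every x_J ∈ Π_{k∈J} X_k, ∑_{x_i} ψ(x_i, x_J) > 0; (ii) for every k ∈ J and every y ∈ Π_{l∈J, l≠k} X_l, ∑_{x_k} ∑_{r∈R} Φ((x_k, y), r) > 0. For each k ∈ J, define l_k, u_k : X_k → ℝ as the pointwise infimum and supremum, over all nonzero factorized measures g on Π_{l≠k} X_l, of the normalization of the function x_k ↦ ∑_{y ∈ Π_{l≠k} X_l} ∑_{r∈R} Φ((x_k, y), r) g(y). Let p : X_i → ℝ be the normalization of the function x_i ↦ ∑_{x_J} ∑_{r} ψ(x_i,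 x_J) Φ(x_J, r). Then for every x_i ∈ X_i, p(x_i) lies between the infimum and the supremum, over all nonzero measures h on Π_{k∈J} X_k satisfying ∏_{k∈J} l_k((x_J)_k) ≤ h(x_J) ≤ ∏_{k∈J} u_k((x_J)_k) for all x_J, of the value at x_i of the normalization of the function x_i ↦ ∑_{x_J} ψ(x_i, x_J) h(x_J). -/
set_option linter.unusedSectionVars false
set_option maxHeartbeats 1000000

section chi
noncomputable def chi (p : Prop) : ℝ := haveI := Classical.propDecidable p; if p then 1 else 0

lemma chi_true {p : Prop} (h : p) : chi p = 1 := by simp [chi, h]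
lemma chi_false {p : Prop} (h : ¬ p) : chi p = 0 := by simp [chi, h]
lemma chi_nonneg (p : Prop) : 0 ≤ chi p := by
  by_cases h : p
  · rw [chi_true h]; norm_num
  · rw [chi_false h]
lemma chi_mono {p q : Prop} (h : p → q) : chi p ≤ chi q := by
  by_cases hp : p
  · rw [chi_true hp, chi_true (h hp)]
  · rw [chi_false hp]; exact chi_nonneg q
lemma chi_congr {p q : Prop} (h : p ↔ q) : chi p = chi q := by
  by_cases hp : p
  · rw [chi_true hp, chi_true (h.1 hp)]
  · rw [chi_false hp, chi_false (fun hq => hp (h.2 hq))]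
end chi


section aux
variable {J : Type*} [Fintype J] [DecidableEq J] {Xk : J → Type*}
  [∀ k, Fintype (Xk k)]

@[simp] lemma splice_same (k : J) (xk : Xk k) (y : ∀ a : {a : J // a ≠ k}, Xk a.1) :
    splice k xk y k = xk := by simp [splice]

lemma splice_ne (k : J) (xk : Xk k) (y : ∀ a : {a : J // a ≠ k}, Xk a.1)
    {a : J} (h : a ≠ k) : splice k xk y a = y ⟨a, h⟩ := dif_neg h

lemma splice_eq_update (k : J) (xk : Xk k) (xJ : ∀ k, Xk k) :
    splice k xk (fun a => xJ a.1) = Function.update xJ k xk := by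
  funext a
  by_cases h : a = k
  · subst h; simp [splice]
  · simp [splice, h, Function.update_of_ne h]

lemma splice_self (k : J) (z : ∀ k, Xk k) :
    splice k (z k) (fun a => z a.1) = z := by
  funext a
  by_cases h : a = k
  · subst h; simp [splice]
  · simp [splice, h]

lemma sum_splice (k : J) (f : (∀ k, Xk k) → ℝ) :
    ∑ z : (∀ k, Xk k), f z
      = ∑ xk : Xk k, ∑ y : (∀ a : {a : J // a ≠ k}, Xk a.1), f (splice k xk y) := by
  calc ∑ z : (∀ k, Xk k), f z
      = ∑ p : Xk k × (∀ a : {a : J // a ≠ k}, Xk a.1), f (splice k p.1 p.2) :=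
        Fintype.sum_equiv (Equiv.piSplitAt k Xk) _ _
          (fun z => by simp [Equiv.piSplitAt, splice_self])
    _ = _ := Fintype.sum_prod_type _

lemma prod_split (k : J) (t : J → ℝ) :
    ∏ a, t a = t k * ∏ a : {a : J // a ≠ k}, t a.1 := by
  rw [Fintype.prod_eq_mul_prod_compl k]
  congr 1
  exact Finset.prod_subtype {k}ᶜ (fun x => by simp) t

/-- Partial sum of `F` over the coordinates in `s`, other coordinates fixed to `xJ`. -/
noncomputable def pS (F : (∀ k, Xk k) → ℝ) (s : Finset J) (xJ : ∀ k, Xk k) : ℝ :=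
  ∑ z : (∀ k, Xk k), (∏ k, chi (k ∈ s ∨ z k = xJ k)) * F z

lemma pS_nonneg {F : (∀ k, Xk k) → ℝ} (hF : ∀ z, 0 ≤ F z) (s : Finset J) (xJ : ∀ k, Xk k) :
    0 ≤ pS F s xJ :=
  Finset.sum_nonneg fun z _ => mul_nonneg (Finset.prod_nonneg fun k _ => chi_nonneg _) (hF z)

lemma pS_empty (F : (∀ k, Xk k) → ℝ) (xJ : ∀ k, Xk k) : pS F ∅ xJ = F xJ := by
  rw [pS]
  rw [Finset.sum_eq_single xJ]
  · simp [chi_true]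
  · intro z _ hz
    obtain ⟨k, hk⟩ := Function.ne_iff.mp hz
    rw [Finset.prod_eq_zero (Finset.mem_univ k) (by simp [chi_false, hk]), zero_mul]
  · simp

lemma pS_univ (F : (∀ k, Xk k) → ℝ) (xJ : ∀ k, Xk k) :
    pS F Finset.univ xJ = ∑ z, F z := by
  rw [pS]
  refine Finset.sum_congr rfl fun z _ => ?_
  rw [Finset.prod_eq_one fun k _ => chi_true (Or.inl (Finset.mem_univ k)), one_mul]

lemma pS_mono_set {F : (∀ k, Xk k) → ℝ} (hF : ∀ z, 0 ≤ F z) {s t : Finset J} (hst : s ⊆ t)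
    (xJ : ∀ k, Xk k) : pS F s xJ ≤ pS F t xJ := by
  refine Finset.sum_le_sum fun z _ => mul_le_mul_of_nonneg_right ?_ (hF z)
  exact Finset.prod_le_prod (fun k _ => chi_nonneg _)
    (fun k _ => chi_mono (fun h => h.imp (fun hs => hst hs) id))

lemma le_pS {F : (∀ k, Xk k) → ℝ} (hF : ∀ z, 0 ≤ F z) (s : Finset J) (xJ : ∀ k, Xk k) :
    F xJ ≤ pS F s xJ := by
  rw [← pS_empty F xJ]; exact pS_mono_set hF (Finset.empty_subset s) xJ

lemma pS_splice {F : (∀ k, Xk k) → ℝ} {s : Finset J} {k : J} (hk : k ∉ s)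
    (xk : Xk k) (xJ : ∀ k, Xk k) :
    pS F s (Function.update xJ k xk)
      = ∑ y : (∀ a : {a : J // a ≠ k}, Xk a.1),
          F (splice k xk y) * ∏ a : {a : J // a ≠ k}, chi (a.1 ∈ s ∨ y a = xJ a.1) := by
  rw [pS, sum_splice k]
  have hw : ∀ (xk' : Xk k) (y : ∀ a : {a : J // a ≠ k}, Xk a.1),
      (∏ a, chi (a ∈ s ∨ splice k xk' y a = Function.update xJ k xk a))
        = chi (xk' = xk) * ∏ a : {a : J // a ≠ k}, chi (a.1 ∈ s ∨ y a = xJ a.1) := by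
    intro xk' y
    rw [prod_split k (fun a => chi (a ∈ s ∨ splice k xk' y a = Function.update xJ k xk a))]
    congr 1
    · apply chi_congr
      simp [hk, splice_same, Function.update_self]
    · refine Finset.prod_congr rfl fun a _ => chi_congr ?_
      rw [splice_ne k xk' y a.2, Function.update_of_ne a.2]
  rw [Finset.sum_eq_single xk]
  · refine Finset.sum_congr rfl fun y _ => ?_
    rw [hw, chi_true rfl, one_mul, mul_comm]
  · intro xk' _ hne
    refine Finset.sum_eq_zero fun y _ => ?_
    rw [hw, chi_false hne, zero_mul, zero_mul]
  · simp

lemma pS_insert {F : (∀ k, Xk k) → ℝ} {s : Finset J} {k : J} (hk : k ∉ s) (xJ : ∀ k, Xk k) :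
    pS F (insert k s) xJ = ∑ xk : Xk k, pS F s (Function.update xJ k xk) := by
  simp_rw [pS_splice hk]
  rw [pS, sum_splice k]
  refine Finset.sum_congr rfl fun xk _ => Finset.sum_congr rfl fun y _ => ?_
  rw [mul_comm]
  congr 1
  rw [prod_split k (fun a => chi (a ∈ insert k s ∨ splice k xk y a = xJ a))]
  rw [chi_true (Or.inl (Finset.mem_insert_self k s)), one_mul]
  refine Finset.prod_congr rfl fun a _ => chi_congr ?_
  rw [splice_ne k xk y a.2]
  simp [Finset.mem_insert, a.2]

end aux


/-- Corollary of the second basic lemma: the exact marginal `p` of the variable `i`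
lies between the extrema of the normalized marginals obtained from nonzero measures
`h` on the cavity contained in the box with bounds `∏ k, l k` and `∏ k, u k`. -/
theorem stmt_11 {Xi : Type*} [Fintype Xi] [Nonempty Xi]
    {J : Type*} [Fintype J] [DecidableEq J] [Nonempty J]
    (Xk : J → Type*) [∀ k, Fintype (Xk k)] [∀ k, Nonempty (Xk k)]
    (R : Type*) [Fintype R] [Nonempty R]
    (ψ : Xi × (∀ k, Xk k) → ℝ) (hψ : ∀ z, 0 ≤ ψ z)
    (Φ : (∀ k, Xk k) × R → ℝ) (hΦ : ∀ z, 0 ≤ Φ z)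
    (hψpos : ∀ xJ : ∀ k, Xk k, 0 < ∑ xi, ψ (xi, xJ))
    (hΦpos : ∀ (k : J) (y : ∀ l : {l : J // l ≠ k}, Xk l.1),
      0 < ∑ xk : Xk k, ∑ r : R, Φ (splice k xk y, r))
    (l u : ∀ k, Xk k → ℝ)
    (hl : ∀ (k : J) (xk : Xk k),
      IsGLB {r : ℝ | ∃ g : (∀ a : {a : J // a ≠ k}, Xk a.1) → ℝ,
          (∃ gs : ∀ a : {a : J // a ≠ k}, Xk a.1 → ℝ,
            (∀ a z, 0 ≤ gs a z) ∧ g = fun y => ∏ a, gs a (y a)) ∧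
          (∃ y, 0 < g y) ∧
          r = (∑ y, ∑ rr : R, Φ (splice k xk y, rr) * g y)
              / ∑ xk' : Xk k, ∑ y, ∑ rr : R, Φ (splice k xk' y, rr) * g y}
        (l k xk))
    (hu : ∀ (k : J) (xk : Xk k),
      IsLUB {r : ℝ | ∃ g : (∀ a : {a : J // a ≠ k}, Xk a.1) → ℝ,
          (∃ gs : ∀ a : {a : J // a ≠ k}, Xk a.1 → ℝ,
            (∀ a z, 0 ≤ gs a z) ∧ g = fun y => ∏ a, gs a (y a)) ∧
          (∃ y, 0 < g y) ∧
          r = (∑ y, ∑ rr : R, Φ (splice k xk y, rr) * g y)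
              / ∑ xk' : Xk k, ∑ y, ∑ rr : R, Φ (splice k xk' y, rr) * g y}
        (u k xk)) :
    ∀ xi : Xi,
      sInf {v : ℝ | ∃ h : (∀ k, Xk k) → ℝ,
          (∀ xJ, 0 ≤ h xJ) ∧
          (∀ xJ, (∏ k, l k (xJ k)) ≤ h xJ ∧ h xJ ≤ ∏ k, u k (xJ k)) ∧
          (∃ xJ, 0 < h xJ) ∧
          v = (∑ xJ, ψ (xi, xJ) * h xJ) / ∑ xi', ∑ xJ, ψ (xi', xJ) * h xJ}
        ≤ (∑ xJ, ∑ r : R, ψ (xi, xJ) * Φ (xJ, r))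
          / (∑ xi', ∑ xJ, ∑ r : R, ψ (xi', xJ) * Φ (xJ, r)) ∧
      (∑ xJ, ∑ r : R, ψ (xi, xJ) * Φ (xJ, r))
          / (∑ xi', ∑ xJ, ∑ r : R, ψ (xi', xJ) * Φ (xJ, r))
        ≤ sSup {v : ℝ | ∃ h : (∀ k, Xk k) → ℝ,
          (∀ xJ, 0 ≤ h xJ) ∧
          (∀ xJ, (∏ k, l k (xJ k)) ≤ h xJ ∧ h xJ ≤ ∏ k, u k (xJ k)) ∧
          (∃ xJ, 0 < h xJ) ∧
          v = (∑ xJ, ψ (xi, xJ) * h xJ) / ∑ xi', ∑ xJ, ψ (xi', xJ) * h xJ} := by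
    classical
  set F : (∀ k, Xk k) → ℝ := fun xJ => ∑ r : R, Φ (xJ, r) with hFdef
  have hF : ∀ z, 0 ≤ F z := fun z => Finset.sum_nonneg fun r _ => hΦ _
  have hFpos : ∀ (k : J) (y : ∀ a : {a : J // a ≠ k}, Xk a.1),
      0 < ∑ xk : Xk k, F (splice k xk y) := fun k y => hΦpos k y
  -- nonnegativity of l and u
  have hset_nonneg : ∀ (k : J) (xk : Xk k) (r : ℝ),
      r ∈ {r : ℝ | ∃ g : (∀ a : {a : J // a ≠ k}, Xk a.1) → ℝ,
          (∃ gs : ∀ a : {a : J // a ≠ k}, Xk a.1 → ℝ,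
            (∀ a z, 0 ≤ gs a z) ∧ g = fun y => ∏ a, gs a (y a)) ∧
          (∃ y, 0 < g y) ∧
          r = (∑ y, ∑ rr : R, Φ (splice k xk y, rr) * g y)
              / ∑ xk' : Xk k, ∑ y, ∑ rr : R, Φ (splice k xk' y, rr) * g y} → 0 ≤ r := by
    rintro k xk r ⟨g, ⟨gs, hgs, hg⟩, -, rfl⟩
    have hgnn : ∀ y, 0 ≤ g y := by
      intro y; rw [hg]; exact Finset.prod_nonneg fun a _ => hgs a _
    refine div_nonneg (Finset.sum_nonneg fun y _ => Finset.sum_nonneg fun rr _ =>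
      mul_nonneg (hΦ _) (hgnn y)) ?_
    exact Finset.sum_nonneg fun xk' _ => Finset.sum_nonneg fun y _ =>
      Finset.sum_nonneg fun rr _ => mul_nonneg (hΦ _) (hgnn y)
  have hl0 : ∀ (k : J) (xk : Xk k), 0 ≤ l k xk := fun k xk =>
    (hl k xk).2 (fun r hr => hset_nonneg k xk r hr)
  have hu0 : ∀ (k : J) (xk : Xk k), 0 ≤ u k xk := by
    intro k xk
    set r0 : ℝ := (∑ y, ∑ rr : R, Φ (splice k xk y, rr) * (1:ℝ))
        / ∑ xk' : Xk k, ∑ y, ∑ rr : R, Φ (splice k xk' y, rr) * (1:ℝ) with hr0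
    have hmem : r0 ∈ {r : ℝ | ∃ g : (∀ a : {a : J // a ≠ k}, Xk a.1) → ℝ,
          (∃ gs : ∀ a : {a : J // a ≠ k}, Xk a.1 → ℝ,
            (∀ a z, 0 ≤ gs a z) ∧ g = fun y => ∏ a, gs a (y a)) ∧
          (∃ y, 0 < g y) ∧
          r = (∑ y, ∑ rr : R, Φ (splice k xk y, rr) * g y)
              / ∑ xk' : Xk k, ∑ y, ∑ rr : R, Φ (splice k xk' y, rr) * g y} := by
      refine ⟨fun _ => 1, ⟨fun _ _ => 1, fun a z => zero_le_one, by funext y; simp⟩,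
        ⟨Classical.arbitrary _, one_pos⟩, ?_⟩
      simp [hr0]
    exact le_trans (hset_nonneg k xk r0 hmem) ((hu k xk).1 hmem)
  -- the key induction
  have main : ∀ s : Finset J, ∀ xJ : ∀ k, Xk k,
      (∏ k ∈ s, l k (xJ k)) * pS F s xJ ≤ F xJ ∧
      F xJ ≤ (∏ k ∈ s, u k (xJ k)) * pS F s xJ := by
    intro s
    induction s using Finset.induction_on with
    | empty => intro xJ; rw [pS_empty]; simp
    | @insert k s hk ih =>
      intro xJ
      have hden_pos : 0 < pS F (insert k s) xJ := by
        rw [pS_insert hk]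
        calc (0:ℝ) < ∑ xk : Xk k, F (splice k xk (fun a => xJ a.1)) :=
              hFpos k (fun a => xJ a.1)
          _ ≤ ∑ xk : Xk k, pS F s (Function.update xJ k xk) := by
              refine Finset.sum_le_sum fun xk _ => ?_
              rw [splice_eq_update]
              exact le_pS hF s (Function.update xJ k xk)
      -- the conditional marginal belongs to the set for (k, xJ k)
      have key : ∀ xk' : Xk k,
          (∑ y, ∑ rr : R, Φ (splice k xk' y, rr)
              * ∏ a : {a : J // a ≠ k}, chi (a.1 ∈ s ∨ y a = xJ a.1))
            = pS F s (Function.update xJ k xk') := by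
        intro xk'
        rw [pS_splice hk]
        refine Finset.sum_congr rfl fun y _ => ?_
        rw [← Finset.sum_mul]
      have hmem : pS F s xJ / pS F (insert k s) xJ
          ∈ {r : ℝ | ∃ g : (∀ a : {a : J // a ≠ k}, Xk a.1) → ℝ,
          (∃ gs : ∀ a : {a : J // a ≠ k}, Xk a.1 → ℝ,
            (∀ a z, 0 ≤ gs a z) ∧ g = fun y => ∏ a, gs a (y a)) ∧
          (∃ y, 0 < g y) ∧
          r = (∑ y, ∑ rr : R, Φ (splice k (xJ k) y, rr) * g y)
              / ∑ xk' : Xk k, ∑ y, ∑ rr : R, Φ (splice k xk' y, rr) * g y} := by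
        refine ⟨fun y => ∏ a : {a : J // a ≠ k}, chi (a.1 ∈ s ∨ y a = xJ a.1),
          ⟨fun a z => chi (a.1 ∈ s ∨ z = xJ a.1), fun a z => chi_nonneg _, rfl⟩,
          ⟨fun a => xJ a.1, ?_⟩, ?_⟩
        · show (0:ℝ) < ∏ a : {a : J // a ≠ k}, chi (a.1 ∈ s ∨ xJ a.1 = xJ a.1)
          rw [Finset.prod_eq_one fun a _ => chi_true (Or.inr rfl)]; exact one_pos
        · show pS F s xJ / pS F (insert k s) xJ
            = (∑ y, ∑ rr : R, Φ (splice k (xJ k) y, rr)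
                * ∏ a : {a : J // a ≠ k}, chi (a.1 ∈ s ∨ y a = xJ a.1))
              / ∑ xk' : Xk k, ∑ y, ∑ rr : R, Φ (splice k xk' y, rr)
                * ∏ a : {a : J // a ≠ k}, chi (a.1 ∈ s ∨ y a = xJ a.1)
          rw [key (xJ k), Function.update_eq_self]
          congr 1
          rw [pS_insert hk]
          exact Finset.sum_congr rfl fun xk' _ => (key xk').symm
      have hlle : l k (xJ k) ≤ pS F s xJ / pS F (insert k s) xJ := (hl k (xJ k)).1 hmem
      have hule : pS F s xJ / pS F (insert k s) xJ ≤ u k (xJ k) := (hu k (xJ k)).1 hmem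
      have hl' : l k (xJ k) * pS F (insert k s) xJ ≤ pS F s xJ :=
        (le_div_iff₀ hden_pos).mp hlle
      have hu' : pS F s xJ ≤ u k (xJ k) * pS F (insert k s) xJ :=
        (div_le_iff₀ hden_pos).mp hule
      constructor
      · rw [Finset.prod_insert hk]
        calc l k (xJ k) * (∏ a ∈ s, l a (xJ a)) * pS F (insert k s) xJ
            = (∏ a ∈ s, l a (xJ a)) * (l k (xJ k) * pS F (insert k s) xJ) := by ring
          _ ≤ (∏ a ∈ s, l a (xJ a)) * pS F s xJ := by
              exact mul_le_mul_of_nonneg_left hl'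
                (Finset.prod_nonneg fun a _ => hl0 a _)
          _ ≤ F xJ := (ih xJ).1
      · rw [Finset.prod_insert hk]
        calc F xJ ≤ (∏ a ∈ s, u a (xJ a)) * pS F s xJ := (ih xJ).2
          _ ≤ (∏ a ∈ s, u a (xJ a)) * (u k (xJ k) * pS F (insert k s) xJ) :=
              mul_le_mul_of_nonneg_left hu' (Finset.prod_nonneg fun a _ => hu0 a _)
          _ = u k (xJ k) * (∏ a ∈ s, u a (xJ a)) * pS F (insert k s) xJ := by ring
  -- total mass
  set Z : ℝ := ∑ z : (∀ k, Xk k), F z with hZdef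
  have hZpos : 0 < Z := by
    have k0 : J := Classical.arbitrary J
    have xJ0 : ∀ k, Xk k := Classical.arbitrary _
    have h1 : pS F (insert k0 ∅) xJ0 ≤ pS F Finset.univ xJ0 :=
      pS_mono_set hF (Finset.subset_univ _) xJ0
    rw [pS_univ] at h1
    refine lt_of_lt_of_le ?_ h1
    rw [pS_insert (Finset.notMem_empty k0)]
    calc (0:ℝ) < ∑ xk : Xk k0, F (splice k0 xk (fun a => xJ0 a.1)) := hFpos k0 _
      _ ≤ _ := by
          refine Finset.sum_le_sum fun xk _ => ?_
          rw [splice_eq_update, pS_empty]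
  have hZne : Z ≠ 0 := ne_of_gt hZpos
  -- the exact measure h
  set h : (∀ k, Xk k) → ℝ := fun xJ => F xJ / Z with hhdef
  have hh0 : ∀ xJ, 0 ≤ h xJ := fun xJ => div_nonneg (hF xJ) hZpos.le
  have hbox : ∀ xJ : ∀ k, Xk k, (∏ k, l k (xJ k)) ≤ h xJ ∧ h xJ ≤ ∏ k, u k (xJ k) := by
    intro xJ
    have := main Finset.univ xJ
    rw [pS_univ, ← hZdef] at this
    constructor
    · rw [hhdef]; exact (le_div_iff₀ hZpos).mpr this.1
    · rw [hhdef]; exact (div_le_iff₀ hZpos).mpr this.2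
  have hhex : ∃ xJ, 0 < h xJ := by
    have k0 : J := Classical.arbitrary J
    have y0 : ∀ a : {a : J // a ≠ k0}, Xk a.1 := Classical.arbitrary _
    have := hFpos k0 y0
    obtain ⟨xk, -, hxk⟩ := Finset.exists_lt_of_sum_lt (by simpa using this :
      ∑ xk : Xk k0, (0:ℝ) < ∑ xk : Xk k0, F (splice k0 xk y0))
    exact ⟨splice k0 xk y0, div_pos hxk hZpos⟩
  obtain ⟨xJp, hxJp⟩ := hhex
  intro xi
  -- identify the target value
  have hA : ∀ xi' : Xi, ∑ xJ, ψ (xi', xJ) * h xJ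
      = (∑ xJ, ∑ r : R, ψ (xi', xJ) * Φ (xJ, r)) / Z := by
    intro xi'
    rw [Finset.sum_div]
    refine Finset.sum_congr rfl fun xJ _ => ?_
    rw [← Finset.mul_sum, hhdef, mul_div_assoc]
  have hBpos : 0 < ∑ xi', ∑ xJ, ∑ r : R, ψ (xi', xJ) * Φ (xJ, r) := by
    have hstep : ∀ xi' : Xi, ψ (xi', xJp) * F xJp ≤ ∑ xJ, ∑ r : R, ψ (xi', xJ) * Φ (xJ, r) := by
      intro xi'
      calc ψ (xi', xJp) * F xJp = ∑ r : R, ψ (xi', xJp) * Φ (xJp, r) := Finset.mul_sum _ _ _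
        _ ≤ _ := Finset.single_le_sum (f := fun xJ => ∑ r : R, ψ (xi', xJ) * Φ (xJ, r))
            (fun xJ _ => Finset.sum_nonneg fun r _ => mul_nonneg (hψ _) (hΦ _))
            (Finset.mem_univ xJp)
    calc (0:ℝ) < (∑ xi', ψ (xi', xJp)) * F xJp := by
          refine mul_pos (hψpos xJp) ?_
          have := hxJp
          rw [hhdef] at this
          by_contra hc
          push_neg at hc
          have : F xJp / Z ≤ 0 := div_nonpos_of_nonpos_of_nonneg hc hZpos.le
          linarith [hxJp]
      _ = ∑ xi', ψ (xi', xJp) * F xJp := by rw [Finset.sum_mul]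
      _ ≤ _ := Finset.sum_le_sum fun xi' _ => hstep xi'
  have hFp : 0 < F xJp := by
    by_contra hc
    push_neg at hc
    have : F xJp / Z ≤ 0 := div_nonpos_of_nonpos_of_nonneg hc hZpos.le
    rw [hhdef] at hxJp
    linarith
  -- membership of the target value
  have htarget : (∑ xJ, ∑ r : R, ψ (xi, xJ) * Φ (xJ, r))
      / (∑ xi', ∑ xJ, ∑ r : R, ψ (xi', xJ) * Φ (xJ, r))
      = (∑ xJ, ψ (xi, xJ) * h xJ) / ∑ xi', ∑ xJ, ψ (xi', xJ) * h xJ := by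
    rw [hA]
    rw [show (∑ xi', ∑ xJ, ψ (xi', xJ) * h xJ)
        = (∑ xi', ∑ xJ, ∑ r : R, ψ (xi', xJ) * Φ (xJ, r)) / Z by
      rw [Finset.sum_div]; exact Finset.sum_congr rfl fun xi' _ => hA xi']
    rw [div_div_div_cancel_right₀]
    exact hZne
  have hmemOuter : (∑ xJ, ∑ r : R, ψ (xi, xJ) * Φ (xJ, r))
      / (∑ xi', ∑ xJ, ∑ r : R, ψ (xi', xJ) * Φ (xJ, r))
      ∈ {v : ℝ | ∃ h : (∀ k, Xk k) → ℝ,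
          (∀ xJ, 0 ≤ h xJ) ∧
          (∀ xJ, (∏ k, l k (xJ k)) ≤ h xJ ∧ h xJ ≤ ∏ k, u k (xJ k)) ∧
          (∃ xJ, 0 < h xJ) ∧
          v = (∑ xJ, ψ (xi, xJ) * h xJ) / ∑ xi', ∑ xJ, ψ (xi', xJ) * h xJ} :=
    ⟨h, hh0, hbox, ⟨xJp, hxJp⟩, htarget⟩
  have hBddBelow : BddBelow {v : ℝ | ∃ h : (∀ k, Xk k) → ℝ,
          (∀ xJ, 0 ≤ h xJ) ∧
          (∀ xJ, (∏ k, l k (xJ k)) ≤ h xJ ∧ h xJ ≤ ∏ k, u k (xJ k)) ∧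
          (∃ xJ, 0 < h xJ) ∧
          v = (∑ xJ, ψ (xi, xJ) * h xJ) / ∑ xi', ∑ xJ, ψ (xi', xJ) * h xJ} := by
    refine ⟨0, ?_⟩
    rintro v ⟨h', h'0, -, -, rfl⟩
    refine div_nonneg (Finset.sum_nonneg fun xJ _ => mul_nonneg (hψ _) (h'0 xJ)) ?_
    exact Finset.sum_nonneg fun xi' _ =>
      Finset.sum_nonneg fun xJ _ => mul_nonneg (hψ _) (h'0 xJ)
  have hBddAbove : BddAbove {v : ℝ | ∃ h : (∀ k, Xk k) → ℝ,
          (∀ xJ, 0 ≤ h xJ) ∧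
          (∀ xJ, (∏ k, l k (xJ k)) ≤ h xJ ∧ h xJ ≤ ∏ k, u k (xJ k)) ∧
          (∃ xJ, 0 < h xJ) ∧
          v = (∑ xJ, ψ (xi, xJ) * h xJ) / ∑ xi', ∑ xJ, ψ (xi', xJ) * h xJ} := by
    refine ⟨1, ?_⟩
    rintro v ⟨h', h'0, -, -, rfl⟩
    have hnum : ∀ xi' : Xi, 0 ≤ ∑ xJ, ψ (xi', xJ) * h' xJ := fun xi' =>
      Finset.sum_nonneg fun xJ _ => mul_nonneg (hψ _) (h'0 xJ)
    refine div_le_one_of_le₀ ?_ (Finset.sum_nonneg fun xi' _ => hnum xi')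
    exact Finset.single_le_sum (f := fun xi' => ∑ xJ, ψ (xi', xJ) * h' xJ)
      (fun xi' _ => hnum xi') (Finset.mem_univ xi)
  exact ⟨csInf_le hBddBelow hmemOuter, le_csSup hBddAbove hmemOuter⟩
end
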